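/- arXiv:1202.1940 — 2 statements merged into one kernel-verified Lean document; each statement's English description precedes it below -/
import Mathlib

section
/- Under the controlled ODE ẏ = -y² + (c_1 y + c_2)u(t) with controls u taking values in [w,1] (where 0 < w < 1 and y_s²/(c_1 y_s + c_2) < w), the solution map at a fixed time is monotone in the control: if u, ũ are measurable controls with u(t) ≤ ũ(t) for a.e. t, and y, ỹ are the corresponding solutions with the same initial condition y(t_0) = ỹ(t_0) = y_0 ∈ [0, ȳ), then y(t) ≤ ỹ(t) for all t ≥ t_0. -/
/-!
Both trajectories stay nonnegative, since at `y = 0` the field equals `c₂ u > 0`. Where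
`y > ỹ ≥ 0` and `u ≤ ũ ≤ 1`, the difference `d = y - ỹ` satisfies `d' ≤ c₁ d` almost everywhere,
so `e^{-c₁ t} d(t)` cannot increase after the last time `d` vanishes; as `d(t₀) = 0`, `d` never
becomes positive. The controls are only measurable, so the monotonicity step goes through the
fundamental theorem of calculus instead of a pointwise mean value argument.
-/

open MeasureTheory Set Real

theorem le_of_hasDerivAt_of_ae_deriv_nonpos {f f' : ℝ → ℝ} {a b : ℝ} (hab : a ≤ b)
    (hf : ∀ x ∈ Icc a b, HasDerivAt f (f' x) x) (hint : IntegrableOn f' (Icc a b))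
    (hf' : ∀ᵐ x, x ∈ Ioo a b → f' x ≤ 0) : f b ≤ f a := by
  have hftc : ∫ x in a..b, f' x = f b - f a :=
    intervalIntegral.integral_eq_sub_of_hasDerivAt (fun x hx => hf x (uIcc_of_le hab ▸ hx))
      ((intervalIntegrable_iff_integrableOn_Icc_of_le hab).2 hint)
  have hnonpos : ∫ x in a..b, f' x ≤ 0 := by
    rw [intervalIntegral.integral_of_le hab, integral_Ioc_eq_integral_Ioo]
    exact setIntegral_nonpos_ae measurableSet_Ioo hf'
  linarith

theorem nonpos_of_hasDerivAt_of_ae_deriv_le_mul {d d' : ℝ → ℝ} {a b : ℝ} (K : ℝ) (hab : a ≤ b)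
    (hd : ∀ x ∈ Icc a b, HasDerivAt d (d' x) x) (hint : IntegrableOn d' (Icc a b))
    (ha : d a ≤ 0) (hd' : ∀ᵐ x, x ∈ Icc a b → 0 < d x → d' x ≤ K * d x) : d b ≤ 0 := by
  by_contra! hb
  have hdc : ContinuousOn d (Icc a b) := fun x hx => (hd x hx).continuousAt.continuousWithinAt
  set S := Icc a b ∩ d ⁻¹' Iic 0
  have hSbdd : BddAbove S := bddAbove_Icc.mono inter_subset_left
  obtain ⟨⟨hra, hrb⟩, hdr⟩ : sSup S ∈ S :=
    (hdc.preimage_isClosed_of_isClosed isClosed_Icc isClosed_Iic).csSup_mem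
      ⟨a, left_mem_Icc.2 hab, ha⟩ hSbdd
  set r := sSup S
  have hpos : ∀ x ∈ Ioc r b, 0 < d x := fun x hx => by
    by_contra! h
    exact (le_csSup hSbdd ⟨⟨hra.trans hx.1.le, hx.2⟩, h⟩).not_gt hx.1
  have hsub : Icc r b ⊆ Icc a b := Icc_subset_Icc_left hra
  have hφ : ∀ x ∈ Icc r b,
      HasDerivAt (fun x => exp (-K * x) * d x) (exp (-K * x) * (d' x - K * d x)) x := by
    intro x hx
    exact (((hasDerivAt_id x).const_mul (-K)).exp.mul (hd x (hsub hx))).congr_deriv (by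
      simp only [id, mul_one]
      ring)
  have hφint : IntegrableOn (fun x => exp (-K * x) * (d' x - K * d x)) (Icc r b) :=
    ((hint.mono_set hsub).sub ((continuousOn_const.mul hdc).mono hsub).integrableOn_Icc)
      |>.continuousOn_mul (by fun_prop) isCompact_Icc
  have hdecr := le_of_hasDerivAt_of_ae_deriv_nonpos hrb hφ hφint <| by
    filter_upwards [hd'] with x hxK hxI
    have := hxK (hsub (Ioo_subset_Icc_self hxI)) (hpos x (Ioo_subset_Ioc_self hxI))
    exact mul_nonpos_of_nonneg_of_nonpos (exp_pos _).le (by linarith)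
  have hφr : exp (-K * r) * d r ≤ 0 := mul_nonpos_of_nonneg_of_nonpos (exp_pos _).le hdr
  have hφb : 0 < exp (-K * b) * d b := by positivity
  linarith

theorem nonneg_of_hasDerivAt_of_deriv_pos_of_eq_zero {y y' : ℝ → ℝ} {t0 : ℝ}
    (hy : ∀ t, t0 ≤ t → HasDerivAt y (y' t) t) (h0 : 0 ≤ y t0)
    (hpos : ∀ t, t0 ≤ t → y t = 0 → 0 < y' t) : ∀ t, t0 ≤ t → 0 ≤ y t := by
  intro T hT
  have hneg := image_le_of_deriv_right_lt_deriv_boundary (a := t0) (b := T)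
    (f := fun t => -y t) (f' := fun t => -y' t) (B := fun _ => 0) (B' := fun _ => 0)
    (fun t ht => (hy t ht.1).continuousAt.neg.continuousWithinAt)
    (fun t ht => (hy t ht.1).neg.hasDerivWithinAt) (by simpa using h0)
    (fun t => hasDerivAt_const t 0)
    (fun t ht hyt => neg_neg_of_pos (hpos t ht.1 (neg_eq_zero.1 hyt)))
    (right_mem_Icc.2 hT)
  simpa using hneg

def maturationField (c1 c2 y v : ℝ) : ℝ := -y ^ 2 + (c1 * y + c2) * v

theorem maturationField_sub_le {c1 c2 y z v v' : ℝ} (hc1 : 0 ≤ c1) (hc2 : 0 ≤ c2)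
    (hz : 0 ≤ z) (hzy : z ≤ y) (hv : v ≤ v') (hv1 : v ≤ 1) :
    maturationField c1 c2 y v - maturationField c1 c2 z v' ≤ c1 * (y - z) := by
  unfold maturationField
  nlinarith [mul_nonneg (add_nonneg (hz.trans hzy) hz) (sub_nonneg.2 hzy),
    mul_nonneg (mul_nonneg hc1 (sub_nonneg.2 hzy)) (sub_nonneg.2 hv1),
    mul_nonneg (add_nonneg (mul_nonneg hc1 hz) hc2) (sub_nonneg.2 hv)]

theorem integrableOn_maturationField {c1 c2 a b C : ℝ} {y v : ℝ → ℝ}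
    (hy : ContinuousOn y (Icc a b)) (hv : Measurable v) (hvC : ∀ t ∈ Icc a b, |v t| ≤ C) :
    IntegrableOn (fun t => maturationField c1 c2 (y t) (v t)) (Icc a b) := by
  have hvint : IntegrableOn v (Icc a b) :=
    Measure.integrableOn_of_bounded measure_Icc_lt_top.ne hv.aestronglyMeasurable
      ((ae_restrict_iff' measurableSet_Icc).2 (Filter.Eventually.of_forall hvC))
  exact ((hy.pow 2).neg.integrableOn_Icc).add
    (hvint.continuousOn_mul ((continuousOn_const.mul hy).add continuousOn_const) isCompact_Icc)

theorem maturation_trajectory_nonneg {c1 c2 t0 : ℝ} {y v : ℝ → ℝ} (hc2 : 0 < c2)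
    (hv : ∀ t, t0 ≤ t → 0 < v t) (hy0 : 0 ≤ y t0)
    (hy : ∀ t, t0 ≤ t → HasDerivAt y (maturationField c1 c2 (y t) (v t)) t) :
    ∀ t, t0 ≤ t → 0 ≤ y t :=
  nonneg_of_hasDerivAt_of_deriv_pos_of_eq_zero hy hy0 fun t ht hyt => by
    simpa [maturationField, hyt] using mul_pos hc2 (hv t ht)

theorem stmt_5_general (t0 c1 c2 w y0 : ℝ) (hc1 : 0 < c1) (hc2 : 0 < c2)
    (hw : 0 < w)
    (ybar : ℝ)
    (u utilde : ℝ → ℝ) (hu_meas : Measurable u) (hutilde_meas : Measurable utilde)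
    (hu : ∀ t, t0 ≤ t → u t ∈ Set.Icc w 1)
    (hutilde : ∀ t, t0 ≤ t → utilde t ∈ Set.Icc w 1)
    (hle : ∀ᵐ t ∂(volume : Measure ℝ), u t ≤ utilde t)
    (y ytilde : ℝ → ℝ)
    (hy0 : y t0 = y0) (hytilde0 : ytilde t0 = y0) (hy0mem : y0 ∈ Set.Ico 0 ybar)
    (hode : ∀ t, t0 ≤ t → HasDerivAt y (-(y t) ^ 2 + (c1 * y t + c2) * u t) t)
    (hodet : ∀ t, t0 ≤ t →
      HasDerivAt ytilde (-(ytilde t) ^ 2 + (c1 * ytilde t + c2) * utilde t) t) :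
    ∀ t, t0 ≤ t → y t ≤ ytilde t := by
  intro T hT
  have hytilde_nonneg := maturation_trajectory_nonneg hc2
    (fun t ht => hw.trans_le (hutilde t ht).1) (hytilde0 ▸ hy0mem.1) hodet
  have hint : ∀ {z v : ℝ → ℝ}, Measurable v → (∀ t, t0 ≤ t → v t ∈ Icc w 1) →
      (∀ t, t0 ≤ t → HasDerivAt z (maturationField c1 c2 (z t) (v t)) t) →
      IntegrableOn (fun t => maturationField c1 c2 (z t) (v t)) (Icc t0 T) :=
    fun hv hvI hz => integrableOn_maturationField
      (fun t ht => (hz t ht.1).continuousAt.continuousWithinAt) hv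
      fun t ht => abs_le.2 ⟨by linarith [(hvI t ht.1).1], (hvI t ht.1).2⟩
  rw [← sub_nonpos]
  refine nonpos_of_hasDerivAt_of_ae_deriv_le_mul (d := fun t => y t - ytilde t) c1 hT
    (fun t ht => (hode t ht.1).sub (hodet t ht.1))
    ((hint hu_meas hu hode).sub (hint hutilde_meas hutilde hodet))
    (by simp [hy0, hytilde0]) ?_
  filter_upwards [hle] with t hut ht hpos
  exact maturationField_sub_le hc1.le hc2.le (hytilde_nonneg t ht.1) (by linarith) hut
    (hu t ht.1).2

theorem stmt_5 (t0 c1 c2 ys w y0 : ℝ) (hc1 : 0 < c1) (hc2 : 0 < c2) (hys : 0 < ys)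
    (hw : 0 < w) (hw1 : w < 1) (hwys : ys ^ 2 / (c1 * ys + c2) < w)
    (ybar : ℝ) (hybar : ybar = (c1 + Real.sqrt (c1 ^ 2 + 4 * c2)) / 2)
    (u utilde : ℝ → ℝ) (hu_meas : Measurable u) (hutilde_meas : Measurable utilde)
    (hu : ∀ t, t0 ≤ t → u t ∈ Set.Icc w 1)
    (hutilde : ∀ t, t0 ≤ t → utilde t ∈ Set.Icc w 1)
    (hle : ∀ᵐ t ∂(volume : Measure ℝ), u t ≤ utilde t)
    (y ytilde : ℝ → ℝ)
    (hy0 : y t0 = y0) (hytilde0 : ytilde t0 = y0) (hy0mem : y0 ∈ Set.Ico 0 ybar)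
    (hode : ∀ t, t0 ≤ t → HasDerivAt y (-(y t) ^ 2 + (c1 * y t + c2) * u t) t)
    (hodet : ∀ t, t0 ≤ t →
      HasDerivAt ytilde (-(ytilde t) ^ 2 + (c1 * ytilde t + c2) * utilde t) t) :
    ∀ t, t0 ≤ t → y t ≤ ytilde t :=
  stmt_5_general t0 c1 c2 w y0 hc1 hc2 hw ybar u utilde hu_meas hutilde_meas hu hutilde hle y ytilde
    hy0 hytilde0 hy0mem hode hodet
end

section
/- (Continuity of the exit time.) Assume y_s²/(c_1 y_s + c_2) < w < 1 and t_1 > t̂_0 where t̂_0 is the exit time from 0 under constant control w. Let y_0^n → y_0 in [0, y_s] and u^n ⇀* u in L^∞((t_0,t_1);[w,1]). Let e(y_0, u) denote the unique time t ∈ [t_0, t_1] at which the solution of ẏ = -y² + (c_1 y + c_2)u(t), y(t_0) = y_0, reaches y_s. Then e(y_0^n, u^n) → e(y_0, u). -/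
/-
The exit time is the unique zero of `y - y_s` on `[t₀, t₁]`: at the threshold the vector field is
`-y_s² + (c₁ y_s + c₂) u ≥ -y_s² + (c₁ y_s + c₂) w > 0`, so trajectories cross `y_s` upwards and
can never come back. By compactness it therefore suffices to show `yⁿ → y` uniformly on
`[t₀, t₁]`. Trajectories stay in a fixed box `[0, B]`, where the vector field is Lipschitz in `y`,
so `d = yⁿ - y` satisfies `d' = k d + (c₁ y + c₂)(uⁿ - u)` with `k` bounded. Weak-* convergence
makes the primitive of the forcing term tend to `0` pointwise, and uniformly since the primitives
are equi-Lipschitz; the integral form of Gronwall's inequality then bounds `|d|` uniformly.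
-/

open MeasureTheory Filter Set Topology NNReal Real

theorem image_le_of_deriv_neg_at_level {f f' : ℝ → ℝ} {a b B : ℝ}
    (hf : ∀ t ∈ Icc a b, HasDerivAt f (f' t) t) (ha : f a ≤ B)
    (hB : ∀ t ∈ Ico a b, f t = B → f' t < 0) : ∀ t ∈ Icc a b, f t ≤ B :=
  fun _ ht => image_le_of_deriv_right_lt_deriv_boundary' (B' := fun _ => 0)
    (fun t ht => (hf t ht).continuousAt.continuousWithinAt)
    (fun t ht => (hf t (Ico_subset_Icc_self ht)).hasDerivWithinAt) ha continuousOn_const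
    (fun _ _ => hasDerivWithinAt_const _ _ _) hB ht

theorem le_image_of_deriv_pos_at_level {f f' : ℝ → ℝ} {a b B : ℝ}
    (hf : ∀ t ∈ Icc a b, HasDerivAt f (f' t) t) (ha : B ≤ f a)
    (hB : ∀ t ∈ Ico a b, f t = B → 0 < f' t) : ∀ t ∈ Icc a b, B ≤ f t :=
  fun _ ht => image_le_of_deriv_right_lt_deriv_boundary' (f' := fun _ => 0)
    continuousOn_const (fun _ _ => hasDerivWithinAt_const _ _ _) ha
    (fun t ht => (hf t ht).continuousAt.continuousWithinAt)
    (fun t ht => (hf t (Ico_subset_Icc_self ht)).hasDerivWithinAt)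
    (fun t ht hft => hB t ht hft.symm) ht

theorem HasDerivAt.nonpos_of_isMinOn_Icc {f : ℝ → ℝ} {f' a b : ℝ} (hab : a < b)
    (hf : HasDerivAt f f' b) (hmin : IsMinOn f (Icc a b) b) : f' ≤ 0 := by
  have := hmin.localize.hasFDerivWithinAt_nonneg hf.hasDerivWithinAt.hasFDerivWithinAt
    (sub_mem_posTangentConeAt_of_segment_subset (by rw [segment_symm, segment_eq_Icc hab.le]))
  rw [ContinuousLinearMap.toSpanSingleton_apply, smul_eq_mul] at this
  exact nonpos_of_mul_nonneg_right this (sub_neg.2 hab)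

theorem eq_of_deriv_pos_at_level {f f' : ℝ → ℝ} {a b c s t : ℝ}
    (hf : ∀ t ∈ Icc a b, HasDerivAt f (f' t) t) (hc : ∀ t ∈ Icc a b, f t = c → 0 < f' t)
    (hs : s ∈ Icc a b) (ht : t ∈ Icc a b) (hfs : f s = c) (hft : f t = c) : s = t := by
  wlog hst : s < t generalizing s t
  · rcases (not_lt.1 hst).eq_or_lt with h | h
    · exact h.symm
    · exact (this ht hs hft hfs h).symm
  have hsub : Icc s t ⊆ Icc a b := Icc_subset_Icc hs.1 ht.2
  have hmin : IsMinOn f (Icc s t) t := fun r hr =>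
    hft ▸ le_image_of_deriv_pos_at_level (fun r hr => hf r (hsub hr)) hfs.ge
      (fun r hr => hc r (hsub (Ico_subset_Icc_self hr))) r hr
  exact absurd (hc t ht hft) ((hf t ht).nonpos_of_isMinOn_Icc hst hmin).not_gt

theorem lipschitzOnWith_primitive {f : ℝ → ℝ} {a b C : ℝ} (hf : IntegrableOn f (Icc a b))
    (hC : ∀ x ∈ Icc a b, |f x| ≤ C) :
    LipschitzOnWith (Real.toNNReal C) (fun t => ∫ s in a..t, f s) (Icc a b) := by
  refine LipschitzOnWith.of_dist_le' fun t ht s hs => ?_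
  have ha : a ∈ Icc a b := ⟨le_rfl, ht.1.trans ht.2⟩
  rw [dist_eq_norm, intervalIntegral.integral_interval_sub_left
    (hf.mono_set (uIcc_subset_Icc ha ht)).intervalIntegrable
    (hf.mono_set (uIcc_subset_Icc ha hs)).intervalIntegrable, Real.dist_eq, ← Real.norm_eq_abs]
  exact intervalIntegral.norm_integral_le_of_norm_le_const fun x hx =>
    hC x (uIcc_subset_Icc hs ht (uIoc_subset_uIcc hx))

theorem tendsto_intervalIntegral_mul_sub_of_weakStar {a b t C : ℝ} {un : ℕ → ℝ → ℝ}
    {u φ : ℝ → ℝ} (hun_meas : ∀ n, Measurable (un n)) (hu_meas : Measurable u)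
    (hun : ∀ n, ∀ s ∈ Icc a b, |un n s| ≤ C) (hu : ∀ s ∈ Icc a b, |u s| ≤ C)
    (hweak : ∀ φ : ℝ → ℝ, IntegrableOn φ (Icc a b) →
      Tendsto (fun n => ∫ s in Icc a b, un n s * φ s) atTop (𝓝 (∫ s in Icc a b, u s * φ s)))
    (hφ : IntegrableOn φ (Icc a b)) (ht : t ∈ Icc a b) :
    Tendsto (fun n => ∫ s in a..t, φ s * (un n s - u s)) atTop (𝓝 0) := by
  set χ := (Icc a t).indicator φ
  have hχ : IntegrableOn χ (Icc a b) := hφ.indicator measurableSet_Icc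
  have hint : ∀ v : ℝ → ℝ, Measurable v → (∀ s ∈ Icc a b, |v s| ≤ C) →
      IntegrableOn (fun s => v s * χ s) (Icc a b) := fun v hv hvC =>
    hχ.bdd_mul hv.aestronglyMeasurable (ae_restrict_of_forall_mem measurableSet_Icc hvC)
  have hsplit : ∀ n, ∫ s in a..t, φ s * (un n s - u s)
      = (∫ s in Icc a b, un n s * χ s) - ∫ s in Icc a b, u s * χ s := by
    intro n
    rw [← integral_sub (hint _ (hun_meas n) (hun n)) (hint u hu_meas hu)]
    have hind : (fun s => un n s * χ s - u s * χ s)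
        = (Icc a t).indicator (fun s => φ s * (un n s - u s)) := by
      ext s
      by_cases hs : s ∈ Icc a t <;> simp [χ, hs]
      ring
    rw [hind, setIntegral_indicator measurableSet_Icc,
      inter_eq_right.2 (Icc_subset_Icc le_rfl ht.2), integral_Icc_eq_integral_Ioc,
      intervalIntegral.integral_of_le ht.1]
  simpa only [hsplit, sub_self] using (hweak χ hχ).sub_const (∫ s in Icc a b, u s * χ s)

theorem tendstoUniformlyOn_of_tendsto_of_lipschitzOnWith {X Y ι : Type*} [PseudoMetricSpace X]
    [PseudoMetricSpace Y] {F : ι → X → Y} {f : X → Y} {s : Set X} {l : Filter ι} {K : ℝ≥0}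
    (hs : IsCompact s) (hF : ∀ i, LipschitzOnWith K (F i) s)
    (h : ∀ x ∈ s, Tendsto (fun i => F i x) l (𝓝 (f x))) :
    TendstoUniformlyOn F f l s := by
  have hFs : EquicontinuousOn F s :=
    (LipschitzOnWith.uniformEquicontinuousOn F K hF).equicontinuousOn
  have := (EquicontinuousOn.tendsto_uniformOnFun_iff_pi' (𝔖 := {s}) (by simpa) (by simpa) l f).2 ?_
  · rw [UniformOnFun.tendsto_iff_tendstoUniformlyOn] at this
    exact this s rfl
  · rw [tendsto_pi_nhds]
    rintro ⟨x, hx⟩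
    simpa using h x (by simpa using hx)

theorem tendstoUniformlyOn_primitive_mul_sub_of_weakStar {a b M : ℝ} {un : ℕ → ℝ → ℝ}
    {u φ : ℝ → ℝ} (hφ : IntegrableOn φ (Icc a b)) (hφM : ∀ s ∈ Icc a b, |φ s| ≤ M)
    (hun_meas : ∀ n, Measurable (un n)) (hu_meas : Measurable u)
    (hun : ∀ n, ∀ s ∈ Icc a b, un n s ∈ Icc 0 1) (hu : ∀ s ∈ Icc a b, u s ∈ Icc 0 1)
    (hweak : ∀ φ : ℝ → ℝ, IntegrableOn φ (Icc a b) →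
      Tendsto (fun n => ∫ s in Icc a b, un n s * φ s) atTop (𝓝 (∫ s in Icc a b, u s * φ s))) :
    TendstoUniformlyOn (fun n t => ∫ s in a..t, φ s * (un n s - u s)) 0 atTop (Icc a b) := by
  have habs : ∀ {v : ℝ → ℝ} {s}, v s ∈ Icc (0 : ℝ) 1 → |v s| ≤ 1 := fun hv =>
    (abs_of_nonneg hv.1).trans_le hv.2
  refine tendstoUniformlyOn_of_tendsto_of_lipschitzOnWith (K := Real.toNNReal M) isCompact_Icc
    (fun n => lipschitzOnWith_primitive ?_ fun s hs => ?_)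
    fun t ht => tendsto_intervalIntegral_mul_sub_of_weakStar hun_meas hu_meas
      (fun n s hs => habs (hun n s hs)) (fun s hs => habs (hu s hs)) hweak hφ ht
  · exact hφ.mul_bdd ((hun_meas n).sub hu_meas).aestronglyMeasurable
      (ae_restrict_of_forall_mem measurableSet_Icc fun s hs =>
        Real.dist_le_of_mem_Icc_01 (hun n s hs) (hu s hs))
  · rw [abs_mul]
    exact (mul_le_of_le_one_right (abs_nonneg _)
      (Real.dist_le_of_mem_Icc_01 (hun n s hs) (hu s hs))).trans (hφM s hs)

theorem mul_gronwallBound_zero_add (K ε x : ℝ) :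
    K * gronwallBound 0 K ε x + ε = ε * exp (K * x) := by
  rcases eq_or_ne K 0 with rfl | hK
  · simp [gronwallBound_K0]
  · rw [gronwallBound_of_K_ne_0 hK]
    field_simp
    ring

theorem le_mul_exp_of_le_add_mul_integral {φ : ℝ → ℝ} {a b ε K : ℝ} (hK : 0 ≤ K)
    (hφ : ContinuousOn φ (Icc a b)) (hφ0 : ∀ t ∈ Icc a b, 0 ≤ φ t)
    (h : ∀ t ∈ Icc a b, φ t ≤ ε + K * ∫ s in a..t, φ s) :
    ∀ t ∈ Icc a b, φ t ≤ ε * exp (K * (t - a)) := by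
  intro t ht
  set Φ : ℝ → ℝ := fun t => ∫ s in a..t, φ s
  have hab : a ≤ b := ht.1.trans ht.2
  have hΦ0 : ∀ t ∈ Icc a b, 0 ≤ Φ t := fun t ht =>
    intervalIntegral.integral_nonneg ht.1 fun s hs => hφ0 s ⟨hs.1, hs.2.trans ht.2⟩
  have hΦcont : ContinuousOn Φ (Icc a b) := by
    have hint := hφ.integrableOn_Icc (μ := volume)
    rw [← uIcc_of_le hab] at hint ⊢
    exact intervalIntegral.continuousOn_primitive_interval hint
  have hΦderiv : ∀ x ∈ Ico a b, HasDerivWithinAt Φ (φ x) (Ici x) x := by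
    intro x hx
    have hIcc : Icc a b ∈ 𝓝[>] x := Icc_mem_nhdsGT_of_mem hx
    exact intervalIntegral.integral_hasDerivWithinAt_right
      ((hφ.mono (Icc_subset_Icc le_rfl hx.2.le)).intervalIntegrable_of_Icc hx.1)
      ((hφ.stronglyMeasurableAtFilter_nhdsWithin measurableSet_Icc x).filter_mono
        (nhdsWithin_le_of_mem hIcc))
      ((hφ x (Ico_subset_Icc_self hx)).mono_of_mem_nhdsWithin hIcc)
  have hΦle := norm_le_gronwallBound_of_norm_deriv_right_le (δ := 0) hΦcont hΦderiv
    (by simp [Φ]) (fun x hx => by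
      rw [Real.norm_of_nonneg (hφ0 x (Ico_subset_Icc_self hx)),
        Real.norm_of_nonneg (hΦ0 x (Ico_subset_Icc_self hx)), add_comm]
      exact h x (Ico_subset_Icc_self hx)) t ht
  rw [Real.norm_of_nonneg (hΦ0 t ht)] at hΦle
  calc φ t ≤ ε + K * Φ t := h t ht
    _ ≤ K * gronwallBound 0 K ε (t - a) + ε := by nlinarith [mul_le_mul_of_nonneg_left hΦle hK]
    _ = ε * exp (K * (t - a)) := mul_gronwallBound_zero_add K ε (t - a)

theorem abs_le_add_integral_of_hasDerivAt_mul_add {d k ψ : ℝ → ℝ} {a b K : ℝ}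
    (hd : ∀ s ∈ Icc a b, HasDerivAt d (k s * d s + ψ s) s)
    (hk_meas : AEStronglyMeasurable k (volume.restrict (Icc a b)))
    (hk : ∀ s ∈ Icc a b, |k s| ≤ K) (hψ : IntegrableOn ψ (Icc a b)) :
    ∀ t ∈ Icc a b, |d t| ≤ |d a| + |∫ s in a..t, ψ s| + K * ∫ s in a..t, |d s| := by
  intro t ht
  have hsub : uIcc a t ⊆ Icc a b := uIcc_subset_Icc ⟨le_rfl, ht.1.trans ht.2⟩ ht
  have hdc : ContinuousOn d (Icc a b) := fun s hs => (hd s hs).continuousAt.continuousWithinAt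
  have hkd : IntervalIntegrable (fun s => k s * d s) volume a t :=
    (IntegrableOn.mono_set (hdc.integrableOn_Icc.bdd_mul hk_meas
      (ae_restrict_of_forall_mem measurableSet_Icc hk)) hsub).intervalIntegrable
  have hψ' : IntervalIntegrable ψ volume a t := (hψ.mono_set hsub).intervalIntegrable
  have hFTC : d t = d a + (∫ s in a..t, k s * d s) + ∫ s in a..t, ψ s := by
    rw [add_assoc, ← intervalIntegral.integral_add hkd hψ',
      intervalIntegral.integral_eq_sub_of_hasDerivAt (fun s hs => hd s (hsub hs)) (hkd.add hψ')]
    ring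
  have hkd_le : |∫ s in a..t, k s * d s| ≤ K * ∫ s in a..t, |d s| := by
    rw [← intervalIntegral.integral_const_mul, ← Real.norm_eq_abs]
    refine intervalIntegral.norm_integral_le_of_norm_le ht.1 (ae_of_all _ fun s hs => ?_)
      (((hdc.abs.integrableOn_Icc.mono_set hsub).intervalIntegrable).const_mul K)
    rw [Real.norm_eq_abs, abs_mul]
    exact mul_le_mul_of_nonneg_right (hk s ⟨hs.1.le, hs.2.trans ht.2⟩) (abs_nonneg _)
  calc |d t| ≤ |d a| + |∫ s in a..t, ψ s| + |∫ s in a..t, k s * d s| := by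
        rw [hFTC, add_right_comm]; exact abs_add_three _ _ _
    _ ≤ |d a| + |∫ s in a..t, ψ s| + K * ∫ s in a..t, |d s| := by gcongr

theorem IsCompact.tendsto_of_tendstoUniformlyOn_of_eq {X Y : Type*} [TopologicalSpace X]
    [FirstCountableTopology X] [MetricSpace Y] {s : Set X} {g : X → Y} {gn : ℕ → X → Y}
    {xn : ℕ → X} {x : X} {c : Y} (hs : IsCompact s) (hg : ContinuousOn g s)
    (hgn : TendstoUniformlyOn gn g atTop s) (hxn : ∀ n, xn n ∈ s) (hgxn : ∀ n, gn n (xn n) = c)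
    (hx : ∀ x' ∈ s, g x' = c → x' = x) : Tendsto xn atTop (𝓝 x) := by
  have hc : Tendsto (fun n => g (xn n)) atTop (𝓝 c) := by
    refine Metric.tendsto_nhds.2 fun ε hε => ?_
    filter_upwards [Metric.tendstoUniformlyOn_iff.1 hgn ε hε] with n hn
    simpa only [hgxn n] using hn (xn n) (hxn n)
  refine tendsto_of_subseq_tendsto fun ns hns => ?_
  obtain ⟨x', hx's, ms, hms, hlim⟩ := hs.tendsto_subseq fun k => hxn (ns k)
  have hgx' : g x' = c := tendsto_nhds_unique
    ((hg x' hx's).tendsto.comp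
      (tendsto_nhdsWithin_iff.2 ⟨hlim, Eventually.of_forall fun k => hxn _⟩))
    (hc.comp (hns.comp hms.tendsto_atTop))
  exact ⟨ms, hx x' hx's hgx' ▸ hlim⟩

theorem maturity_mem_Icc {a b c1 c2 w R : ℝ} {g v : ℝ → ℝ} (hc1 : 0 ≤ c1) (hc2 : 0 < c2)
    (hw : 0 < w) (hv : ∀ t ∈ Icc a b, v t ∈ Icc w 1) (hga : g a ∈ Icc 0 R)
    (hg : ∀ t ∈ Icc a b, HasDerivAt g (-(g t) ^ 2 + (c1 * g t + c2) * v t) t) :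
    ∀ t ∈ Icc a b, g t ∈ Icc 0 (R + c1 + c2 + 1) := by
  intro t ht
  refine ⟨le_image_of_deriv_pos_at_level hg hga.1 (fun s hs hgs => ?_) t ht,
    image_le_of_deriv_neg_at_level hg (by linarith [hga.1, hga.2]) (fun s hs hgs => ?_) t ht⟩
  · have hvs := hv s (Ico_subset_Icc_self hs)
    rw [hgs]
    nlinarith [hvs.1]
  · -- At `B = R + c1 + c2 + 1` we have `B (B - c1) ≥ B (c2 + 1) > c2`, so the field points down.
    have hvs := hv s (Ico_subset_Icc_self hs)
    have hR := hga.1.trans hga.2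
    rw [hgs]
    have := mul_le_of_le_one_right (by positivity : 0 ≤ c1 * (R + c1 + c2 + 1) + c2) hvs.2
    nlinarith

theorem maturity_eq_of_eq_threshold {a b c1 c2 w ys s t : ℝ} {g v : ℝ → ℝ}
    (hden : 0 < c1 * ys + c2) (hw : ys ^ 2 / (c1 * ys + c2) < w)
    (hv : ∀ t ∈ Icc a b, w ≤ v t)
    (hg : ∀ t ∈ Icc a b, HasDerivAt g (-(g t) ^ 2 + (c1 * g t + c2) * v t) t)
    (hs : s ∈ Icc a b) (ht : t ∈ Icc a b) (hgs : g s = ys) (hgt : g t = ys) : s = t := by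
  refine eq_of_deriv_pos_at_level hg (fun r hr hgr => ?_) hs ht hgs hgt
  rw [hgr]
  have := (div_lt_iff₀ hden).1 hw
  nlinarith [mul_le_mul_of_nonneg_right (hv r hr) hden.le]

theorem maturity_abs_sub_le {a b c1 c2 B δ : ℝ} {g₁ g₂ v₁ v₂ : ℝ → ℝ}
    (hv₁ : Measurable v₁) (hv₂ : Measurable v₂)
    (hv₁01 : ∀ t ∈ Icc a b, v₁ t ∈ Icc 0 1) (hv₂01 : ∀ t ∈ Icc a b, v₂ t ∈ Icc 0 1)
    (hg₁B : ∀ t ∈ Icc a b, g₁ t ∈ Icc 0 B) (hg₂B : ∀ t ∈ Icc a b, g₂ t ∈ Icc 0 B)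
    (hg₁ : ∀ t ∈ Icc a b, HasDerivAt g₁ (-(g₁ t) ^ 2 + (c1 * g₁ t + c2) * v₁ t) t)
    (hg₂ : ∀ t ∈ Icc a b, HasDerivAt g₂ (-(g₂ t) ^ 2 + (c1 * g₂ t + c2) * v₂ t) t)
    (hδ : ∀ t ∈ Icc a b, |g₁ a - g₂ a| + |∫ s in a..t, (c1 * g₂ s + c2) * (v₁ s - v₂ s)| ≤ δ) :
    ∀ t ∈ Icc a b, |g₁ t - g₂ t| ≤ δ * exp ((2 * B + |c1|) * (t - a)) := by
  set k : ℝ → ℝ := fun s => c1 * v₁ s - (g₁ s + g₂ s)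
  set K := 2 * B + |c1|
  have hg₁c : ContinuousOn g₁ (Icc a b) := fun t ht => (hg₁ t ht).continuousAt.continuousWithinAt
  have hg₂c : ContinuousOn g₂ (Icc a b) := fun t ht => (hg₂ t ht).continuousAt.continuousWithinAt
  have hkK : ∀ s ∈ Icc a b, |k s| ≤ K := fun s hs => by
    obtain ⟨h1, h2⟩ := hg₁B s hs
    obtain ⟨h3, h4⟩ := hg₂B s hs
    obtain ⟨h5, h6⟩ := hv₁01 s hs
    have hcv : |c1 * v₁ s| ≤ |c1| := by
      rw [abs_mul]
      exact mul_le_of_le_one_right (abs_nonneg _) ((abs_of_nonneg h5).trans_le h6)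
    have hgg : |g₁ s + g₂ s| ≤ 2 * B := abs_le.2 ⟨by linarith, by linarith⟩
    linarith [abs_sub (c1 * v₁ s) (g₁ s + g₂ s)]
  have hψ : IntegrableOn (fun s => (c1 * g₂ s + c2) * (v₁ s - v₂ s)) (Icc a b) :=
    ((hg₂c.const_mul c1).add_const c2).integrableOn_Icc.mul_bdd (hv₁.sub hv₂).aestronglyMeasurable
      (ae_restrict_of_forall_mem measurableSet_Icc fun s hs =>
        Real.dist_le_of_mem_Icc_01 (hv₁01 s hs) (hv₂01 s hs))
  intro t ht
  have hB : 0 ≤ B := (hg₁B t ht).1.trans (hg₁B t ht).2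
  refine le_mul_exp_of_le_add_mul_integral (φ := fun s => |g₁ s - g₂ s|) (by positivity)
    (hg₁c.sub hg₂c).abs (fun _ _ => abs_nonneg _) (fun t ht => ?_) t ht
  have := abs_le_add_integral_of_hasDerivAt_mul_add (d := fun s => g₁ s - g₂ s) (k := k)
    (fun s hs => ((hg₁ s hs).sub (hg₂ s hs)).congr_deriv (by simp only [k]; ring))
    ((hv₁.aestronglyMeasurable.const_mul c1).sub
      ((hg₁c.add hg₂c).aestronglyMeasurable measurableSet_Icc)) hkK hψ t ht
  linarith [hδ t ht]

theorem maturity_tendstoUniformlyOn {a b c1 c2 B : ℝ} {un yn : ℕ → ℝ → ℝ} {u y : ℝ → ℝ}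
    (hun_meas : ∀ n, Measurable (un n)) (hu_meas : Measurable u)
    (hun : ∀ n, ∀ t ∈ Icc a b, un n t ∈ Icc 0 1) (hu : ∀ t ∈ Icc a b, u t ∈ Icc 0 1)
    (hweak : ∀ φ : ℝ → ℝ, IntegrableOn φ (Icc a b) →
      Tendsto (fun n => ∫ t in Icc a b, un n t * φ t) atTop (𝓝 (∫ t in Icc a b, u t * φ t)))
    (hynB : ∀ n, ∀ t ∈ Icc a b, yn n t ∈ Icc 0 B) (hyB : ∀ t ∈ Icc a b, y t ∈ Icc 0 B)
    (hynode : ∀ n, ∀ t ∈ Icc a b,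
      HasDerivAt (yn n) (-(yn n t) ^ 2 + (c1 * yn n t + c2) * un n t) t)
    (hyode : ∀ t ∈ Icc a b, HasDerivAt y (-(y t) ^ 2 + (c1 * y t + c2) * u t) t)
    (hy0 : Tendsto (fun n => yn n a) atTop (𝓝 (y a))) :
    TendstoUniformlyOn yn y atTop (Icc a b) := by
  have hyc : ContinuousOn y (Icc a b) := fun t ht => (hyode t ht).continuousAt.continuousWithinAt
  have hyM : ∀ s ∈ Icc a b, |c1 * y s + c2| ≤ |c1| * B + |c2| := fun s hs => by
    refine (abs_add_le _ _).trans (add_le_add_left ?_ _)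
    rw [abs_mul, abs_of_nonneg (hyB s hs).1]
    exact mul_le_mul_of_nonneg_left (hyB s hs).2 (abs_nonneg _)
  have hA := tendstoUniformlyOn_primitive_mul_sub_of_weakStar
    ((hyc.const_mul c1).add_const c2).integrableOn_Icc hyM hun_meas hu_meas hun hu hweak
  rw [Metric.tendstoUniformlyOn_iff] at hA ⊢
  intro ε hε
  set K := 2 * B + |c1|
  set C := exp (K * (b - a))
  have hC : 0 < C := exp_pos _
  have hη : 0 < ε / (4 * C) := by positivity
  filter_upwards [Metric.tendsto_nhds.1 hy0 _ hη, hA _ hη] with n hn0 hnA t ht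
  have hB : 0 ≤ B := (hyB t ht).1.trans (hyB t ht).2
  have hδ : ∀ s ∈ Icc a b,
      |yn n a - y a| + |∫ r in a..s, (c1 * y r + c2) * (un n r - u r)| ≤ ε / (2 * C) := by
    intro s hs
    have h1 := hnA s hs
    rw [Real.dist_eq] at hn0 h1
    simp only [Pi.zero_apply, zero_sub, abs_neg] at h1
    linarith [show ε / (2 * C) = ε / (4 * C) + ε / (4 * C) by ring]
  have hexp : exp (K * (t - a)) ≤ C :=
    exp_le_exp.2 (mul_le_mul_of_nonneg_left (by linarith [ht.2]) (by positivity))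
  calc dist (y t) (yn n t) = |yn n t - y t| := by rw [Real.dist_eq, abs_sub_comm]
    _ ≤ ε / (2 * C) * exp (K * (t - a)) :=
      maturity_abs_sub_le (hun_meas n) hu_meas (hun n) hu (hynB n) hyB (hynode n) hyode hδ t ht
    _ ≤ ε / (2 * C) * C := mul_le_mul_of_nonneg_left hexp (by positivity)
    _ = ε / 2 := by field_simp
    _ < ε := half_lt_self hε

theorem stmt_14_general (t0 t1 c1 c2 ys w : ℝ) (hc1 : 0 < c1) (hc2 : 0 < c2) (hys : 0 < ys)
    (hw1 : ys ^ 2 / (c1 * ys + c2) < w)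
    -- initial maturities
    (y0 : ℝ) (y0n : ℕ → ℝ) (hy0 : y0 ∈ Set.Icc 0 ys)
    (hy0n : ∀ n, y0n n ∈ Set.Icc 0 ys)
    (hy0conv : Tendsto y0n atTop (nhds y0))
    -- controls and weak-* convergence
    (un : ℕ → ℝ → ℝ) (u : ℝ → ℝ)
    (hun_meas : ∀ n, Measurable (un n)) (hu_meas : Measurable u)
    (hun : ∀ n, ∀ t ∈ Set.Icc t0 t1, un n t ∈ Set.Icc w 1)
    (hu : ∀ t ∈ Set.Icc t0 t1, u t ∈ Set.Icc w 1)
    (hweak : ∀ φ : ℝ → ℝ, IntegrableOn φ (Set.Icc t0 t1) →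
      Tendsto (fun n => ∫ t in Set.Icc t0 t1, un n t * φ t) atTop
        (nhds (∫ t in Set.Icc t0 t1, u t * φ t)))
    -- trajectories
    (yn : ℕ → ℝ → ℝ) (y : ℝ → ℝ)
    (hyn0 : ∀ n, yn n t0 = y0n n) (hy0' : y t0 = y0)
    (hynode : ∀ n, ∀ t ∈ Set.Icc t0 t1,
      HasDerivAt (yn n) (-(yn n t) ^ 2 + (c1 * yn n t + c2) * un n t) t)
    (hyode : ∀ t ∈ Set.Icc t0 t1,
      HasDerivAt y (-(y t) ^ 2 + (c1 * y t + c2) * u t) t)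
    -- exit times
    (en : ℕ → ℝ) (e : ℝ)
    (hen : ∀ n, en n ∈ Set.Icc t0 t1) (he : e ∈ Set.Icc t0 t1)
    (henexit : ∀ n, yn n (en n) = ys) (heexit : y e = ys) :
    Tendsto en atTop (nhds e) := by
  have hden : 0 < c1 * ys + c2 := by positivity
  have hw0 : 0 < w := (div_nonneg (sq_nonneg ys) hden.le).trans_lt hw1
  have hun01 n t ht : un n t ∈ Icc 0 1 := Icc_subset_Icc_left hw0.le (hun n t ht)
  have hu01 t ht : u t ∈ Icc 0 1 := Icc_subset_Icc_left hw0.le (hu t ht)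
  have hyB := maturity_mem_Icc hc1.le hc2 hw0 hu (hy0' ▸ hy0) hyode
  have hynB n := maturity_mem_Icc hc1.le hc2 hw0 (hun n) (hyn0 n ▸ hy0n n) (hynode n)
  have hunif : TendstoUniformlyOn yn y atTop (Icc t0 t1) :=
    maturity_tendstoUniformlyOn hun_meas hu_meas hun01 hu01 hweak hynB hyB hynode hyode
      (by simpa only [hyn0, hy0'] using hy0conv)
  exact isCompact_Icc.tendsto_of_tendstoUniformlyOn_of_eq
    (fun t ht => (hyode t ht).continuousAt.continuousWithinAt) hunif hen henexit
    fun t ht hyt =>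
      maturity_eq_of_eq_threshold hden hw1 (fun t ht => (hu t ht).1) hyode ht he hyt heexit

theorem stmt_14 (t0 t1 c1 c2 ys w : ℝ) (hc1 : 0 < c1) (hc2 : 0 < c2) (hys : 0 < ys)
    (hw1 : ys ^ 2 / (c1 * ys + c2) < w) (hw2 : w < 1)
    -- exit time th0 from 0 under constant control w
    (z : ℝ → ℝ) (hz0 : z t0 = 0)
    (hzode : ∀ t, t0 ≤ t → HasDerivAt z (-(z t) ^ 2 + (c1 * z t + c2) * w) t)
    (th0 : ℝ) (hth0mem : t0 ≤ th0) (hth0 : z th0 = ys) (ht1 : th0 < t1)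
    -- initial maturities
    (y0 : ℝ) (y0n : ℕ → ℝ) (hy0 : y0 ∈ Set.Icc 0 ys)
    (hy0n : ∀ n, y0n n ∈ Set.Icc 0 ys)
    (hy0conv : Tendsto y0n atTop (nhds y0))
    -- controls and weak-* convergence
    (un : ℕ → ℝ → ℝ) (u : ℝ → ℝ)
    (hun_meas : ∀ n, Measurable (un n)) (hu_meas : Measurable u)
    (hun : ∀ n, ∀ t ∈ Set.Icc t0 t1, un n t ∈ Set.Icc w 1)
    (hu : ∀ t ∈ Set.Icc t0 t1, u t ∈ Set.Icc w 1)
    (hweak : ∀ φ : ℝ → ℝ, IntegrableOn φ (Set.Icc t0 t1) →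
      Tendsto (fun n => ∫ t in Set.Icc t0 t1, un n t * φ t) atTop
        (nhds (∫ t in Set.Icc t0 t1, u t * φ t)))
    -- trajectories
    (yn : ℕ → ℝ → ℝ) (y : ℝ → ℝ)
    (hyn0 : ∀ n, yn n t0 = y0n n) (hy0' : y t0 = y0)
    (hynode : ∀ n, ∀ t ∈ Set.Icc t0 t1,
      HasDerivAt (yn n) (-(yn n t) ^ 2 + (c1 * yn n t + c2) * un n t) t)
    (hyode : ∀ t ∈ Set.Icc t0 t1,
      HasDerivAt y (-(y t) ^ 2 + (c1 * y t + c2) * u t) t)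
    -- exit times
    (en : ℕ → ℝ) (e : ℝ)
    (hen : ∀ n, en n ∈ Set.Icc t0 t1) (he : e ∈ Set.Icc t0 t1)
    (henexit : ∀ n, yn n (en n) = ys) (heexit : y e = ys) :
    Tendsto en atTop (nhds e) :=
  stmt_14_general t0 t1 c1 c2 ys w hc1 hc2 hys hw1 y0 y0n hy0 hy0n hy0conv un u hun_meas hu_meas hun
    hu hweak yn y hyn0 hy0' hynode hyode en e hen he henexit heexit
end
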